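/- Let a, b, c be integers with a² - ab + c < 0, and suppose a² - ab + c = -k² for some positive integer k. Then the number of integral points on the graph of f(x) = (x² + bx + c)/(x + a) is exactly 4N - 2, where N is the number of positive divisors of |a² - ab + c| that do not exceed √|a² - ab + c|. -/

import Mathlib

/-!
Clearing the denominator, `y (x + a) = x² + b x + c` is equivalent to
`(x + a) (y - x - b + a) = a² - a b + c`, so `x ↦ x + a` identifies the integral points with
the nonzero divisors of `m = a² - ab + c = -k²`: twice as many as the positive divisors of `k²`.
These pair up as `d ↔ k² / d`, with `d < k` exactly when `k < k² / d`, and `k` unpaired; hence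
`k²` has `2N - 1` positive divisors and the graph `2 (2N - 1)` integral points.
-/

open Set

def integralPoints (a b c : ℤ) : Set (ℤ × ℤ) :=
  {p : ℤ × ℤ | p.1 ≠ -a ∧
    (p.2 : ℝ) = ((p.1 : ℝ) ^ 2 + (b : ℝ) * (p.1 : ℝ) + (c : ℝ)) / ((p.1 : ℝ) + (a : ℝ))}

lemma mem_integralPoints_iff {a b c : ℤ} {p : ℤ × ℤ} :
    p ∈ integralPoints a b c ↔
      p.1 + a ≠ 0 ∧ (p.1 + a) * (p.2 - p.1 - b + a) = a ^ 2 - a * b + c := by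
  obtain ⟨x, y⟩ := p
  have hx : x ≠ -a ↔ x + a ≠ 0 := by omega
  simp only [integralPoints, mem_ofPred_eq, hx]
  refine and_congr_right fun hxa => ?_
  rw [eq_div_iff (by exact_mod_cast hxa)]
  norm_cast
  constructor <;> intro h <;> linear_combination h

lemma ncard_integralPoints (a b c : ℤ) :
    (integralPoints a b c).ncard = {t : ℤ | t ≠ 0 ∧ t ∣ a ^ 2 - a * b + c}.ncard := by
  refine ncard_congr (fun p _ => p.1 + a) (fun p hp => ?_) (fun p q hp hq hpq => ?_) fun t ht => ?_
  · obtain ⟨hxa, hdvd⟩ := mem_integralPoints_iff.1 hp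
    exact ⟨hxa, Dvd.intro _ hdvd⟩
  · obtain ⟨hpa, hp⟩ := mem_integralPoints_iff.1 hp
    obtain ⟨-, hq⟩ := mem_integralPoints_iff.1 hq
    rw [← hpq, ← hp] at hq
    have := mul_left_cancel₀ hpa hq
    ext <;> omega
  · obtain ⟨ht0, s, hs⟩ := ht
    refine ⟨(t - a, s + t - 2 * a + b), mem_integralPoints_iff.2 ⟨by simpa, ?_⟩, by simp⟩
    rw [hs]; ring

lemma finite_setOf_pos_dvd {n : ℤ} (hn : n ≠ 0) : {d : ℤ | 0 < d ∧ d ∣ n}.Finite :=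
  (finite_Icc 1 |n|).subset fun _ ⟨hd, hdn⟩ =>
    ⟨hd, Int.le_of_dvd (abs_pos.2 hn) ((dvd_abs _ _).2 hdn)⟩

lemma ncard_setOf_ne_zero_dvd {n : ℤ} (hn : n ≠ 0) :
    {t : ℤ | t ≠ 0 ∧ t ∣ n}.ncard = 2 * {d : ℤ | 0 < d ∧ d ∣ n}.ncard := by
  set P := {d : ℤ | 0 < d ∧ d ∣ n}
  have hsplit : {t : ℤ | t ≠ 0 ∧ t ∣ n} = P ∪ Neg.neg '' P := by
    ext t
    simp only [P, mem_union, mem_image, mem_ofPred_eq]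
    constructor
    · rintro ⟨ht0, htn⟩
      rcases ht0.lt_or_gt with hneg | hpos
      · exact Or.inr ⟨-t, ⟨by omega, neg_dvd.2 htn⟩, neg_neg t⟩
      · exact Or.inl ⟨hpos, htn⟩
    · rintro (⟨hpos, htn⟩ | ⟨d, ⟨hpos, hdn⟩, rfl⟩)
      · exact ⟨hpos.ne', htn⟩
      · exact ⟨by omega, neg_dvd.2 hdn⟩
  have hdisj : Disjoint P (Neg.neg '' P) := by
    rw [disjoint_left]
    rintro t ⟨ht, -⟩ ⟨d, ⟨hd, -⟩, rfl⟩
    omega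
  have hP := finite_setOf_pos_dvd hn
  rw [hsplit, ncard_union_eq hdisj hP (hP.image _), ncard_image_of_injective _ neg_injective,
    two_mul]

lemma pos_of_mul_eq_sq {k d e : ℤ} (hk : 0 < k) (hd : 0 < d) (hde : d * e = k ^ 2) : 0 < e :=
  pos_of_mul_pos_right (hde ▸ pow_pos hk 2) hd.le

lemma lt_iff_lt_of_mul_eq_sq {k d e : ℤ} (hk : 0 < k) (hd : 0 < d) (hde : d * e = k ^ 2) :
    d < k ↔ k < e := by
  constructor <;> intro h <;> nlinarith

lemma ncard_setOf_dvd_sq_lt_eq_ncard_setOf_dvd_sq_gt {k : ℤ} (hk : 0 < k) :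
    {d : ℤ | 0 < d ∧ d ∣ k ^ 2 ∧ d < k}.ncard = {d : ℤ | 0 < d ∧ d ∣ k ^ 2 ∧ k < d}.ncard := by
  refine ncard_congr (fun d _ => k ^ 2 / d) (fun d ⟨hd, hdk, hlt⟩ => ?_)
    (fun d d' ⟨hd, hdk, _⟩ ⟨hd', hdk', _⟩ he => ?_) fun e ⟨he, hek, hlt⟩ => ?_
  · have hmul : d * (k ^ 2 / d) = k ^ 2 := Int.mul_ediv_cancel' hdk
    exact ⟨pos_of_mul_eq_sq hk hd hmul, Dvd.intro_left d hmul,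
      (lt_iff_lt_of_mul_eq_sq hk hd hmul).1 hlt⟩
  · have hmul : d * (k ^ 2 / d) = k ^ 2 := Int.mul_ediv_cancel' hdk
    have hmul' : d' * (k ^ 2 / d) = k ^ 2 := he ▸ Int.mul_ediv_cancel' hdk'
    have hpos : 0 < k ^ 2 / d := pos_of_mul_eq_sq hk hd hmul
    exact mul_right_cancel₀ hpos.ne' (hmul.trans hmul'.symm)
  · obtain ⟨q, hq⟩ := hek
    have hmul : q * e = k ^ 2 := by rw [hq, mul_comm]
    have hq0 : 0 < q := pos_of_mul_eq_sq hk he (by rw [mul_comm, hmul])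
    exact ⟨q, ⟨hq0, Dvd.intro e hmul, (lt_iff_lt_of_mul_eq_sq hk hq0 hmul).2 hlt⟩,
      by rw [hq, Int.mul_ediv_cancel e hq0.ne']⟩

lemma ncard_setOf_pos_dvd_sq {k : ℤ} (hk : 0 < k) :
    {d : ℤ | 0 < d ∧ d ∣ k ^ 2}.ncard + 1 = 2 * {d : ℤ | 0 < d ∧ d ∣ k ^ 2 ∧ d ≤ k}.ncard := by
  have hfinite (P : ℤ → Prop) : {d : ℤ | 0 < d ∧ d ∣ k ^ 2 ∧ P d}.Finite :=
    (finite_setOf_pos_dvd (by positivity)).subset fun _ ⟨hd, hdk, _⟩ => ⟨hd, hdk⟩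
  set L := {d : ℤ | 0 < d ∧ d ∣ k ^ 2 ∧ d < k}
  set U := {d : ℤ | 0 < d ∧ d ∣ k ^ 2 ∧ k < d}
  set A := {d : ℤ | 0 < d ∧ d ∣ k ^ 2 ∧ d ≤ k}
  have hLU := ncard_setOf_dvd_sq_lt_eq_ncard_setOf_dvd_sq_gt hk
  have hA : A = insert k L := by
    ext d
    simp only [A, L, mem_insert_iff, mem_ofPred_eq]
    constructor
    · rintro ⟨hd, hdk, hle⟩
      rcases hle.eq_or_lt with rfl | hlt
      · exact Or.inl rfl
      · exact Or.inr ⟨hd, hdk, hlt⟩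
    · rintro (rfl | ⟨hd, hdk, hlt⟩)
      · exact ⟨hk, Dvd.intro _ (sq d).symm, le_rfl⟩
      · exact ⟨hd, hdk, hlt.le⟩
  have hS : {d : ℤ | 0 < d ∧ d ∣ k ^ 2} = A ∪ U := by
    ext d
    simp only [A, U, mem_union, mem_ofPred_eq]
    constructor
    · rintro ⟨hd, hdk⟩
      exact (le_or_gt d k).imp (fun h => ⟨hd, hdk, h⟩) fun h => ⟨hd, hdk, h⟩
    · rintro (⟨hd, hdk, _⟩ | ⟨hd, hdk, _⟩) <;> exact ⟨hd, hdk⟩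
  have hdisj : Disjoint A U := by
    rw [disjoint_left]
    rintro d ⟨_, _, hle⟩ ⟨_, _, hlt⟩
    exact hle.not_gt hlt
  have hL : k ∉ L := fun ⟨_, _, h⟩ => h.false
  rw [hS, ncard_union_eq hdisj (hfinite _) (hfinite _), hA,
    ncard_insert_of_notMem hL (hfinite _), ← hLU]
  ring

theorem card_integral_points_neg_square_general
    (a b c : ℤ)
    (hsq : ∃ k : ℤ, 0 < k ∧ a ^ 2 - a * b + c = -k ^ 2) :
    Set.ncard {p : ℤ × ℤ | p.1 ≠ -a ∧
        (p.2 : ℝ) = ((p.1 : ℝ) ^ 2 + (b : ℝ) * (p.1 : ℝ) + (c : ℝ)) / ((p.1 : ℝ) + (a : ℝ))}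
      = 4 * Set.ncard {d : ℤ | 0 < d ∧ d ∣ |a ^ 2 - a * b + c| ∧
          (d : ℝ) ≤ Real.sqrt ((|a ^ 2 - a * b + c| : ℤ) : ℝ)} - 2 := by
  obtain ⟨k, hk, hm⟩ := hsq
  have habs : |a ^ 2 - a * b + c| = k ^ 2 := by rw [hm, abs_neg, abs_of_pos (by positivity)]
  have hsqrt : √((k ^ 2 : ℤ) : ℝ) = k := by
    push_cast
    exact Real.sqrt_sq (by exact_mod_cast hk.le)
  have hcount := ncard_setOf_pos_dvd_sq hk
  change (integralPoints a b c).ncard = _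
  rw [ncard_integralPoints, habs, hsqrt, hm, ncard_setOf_ne_zero_dvd (by simpa using hk.ne')]
  simp only [dvd_neg, Int.cast_le]
  omega

/-- If `a^2 - a*b + c = -k^2` for a positive integer `k`, the graph of
`f(x) = (x^2 + b*x + c)/(x + a)` contains exactly `4N - 2` integral points, where `N` is the
number of positive divisors of `|a^2 - a*b + c|` not exceeding `√|a^2 - a*b + c|`. -/
theorem card_integral_points_neg_square
    (a b c : ℤ) (h : a ^ 2 - a * b + c < 0)
    (hsq : ∃ k : ℤ, 0 < k ∧ a ^ 2 - a * b + c = -k ^ 2) :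
    Set.ncard {p : ℤ × ℤ | p.1 ≠ -a ∧
        (p.2 : ℝ) = ((p.1 : ℝ) ^ 2 + (b : ℝ) * (p.1 : ℝ) + (c : ℝ)) / ((p.1 : ℝ) + (a : ℝ))}
      = 4 * Set.ncard {d : ℤ | 0 < d ∧ d ∣ |a ^ 2 - a * b + c| ∧
          (d : ℝ) ≤ Real.sqrt ((|a ^ 2 - a * b + c| : ℤ) : ℝ)} - 2 :=
  card_integral_points_neg_square_general a b c hsq
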